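/- Let Γ be a graph, G a vertex-transitive group of automorphisms of Γ, and B a G-invariant partition of VΓ such that each block B ∈ B is an independent set of Γ. Let Γ_B be the imprimitive quotient graph on B (blocks B₁, B₂ adjacent iff some α ∈ B₁ and β ∈ B₂ are adjacent in Γ). Suppose (Γ_B, Q) is a G^B-transitive decomposition (G^B the induced action of G on B). For each Q ∈ Q let P_Q = { {α,β} ∈ EΓ | {B_i, B_j} ∈ Q with α ∈ B_i, β ∈ B_j }, and P = {P_Q | Q ∈ Q}. Then (Γ, P) is a G-transitive decomposition. -/

import Mathlib

/-!
Because the blocks partition `VΓ`, an edge `{α, β}` lies in `P_Q` exactly when it is an edge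
and the pair of blocks containing `α` and `β` lies in `Q`. Hence every edge of `Γ` lies in the
lift of the unique part of `Q` containing its pair of blocks, and an automorphism `g` preserving
`B` maps `P_Q` onto `P_{Q^g}`, so invariance and transitivity pass from `Q` to `P`.
-/

open Function

theorem Sym2.map.surjective {α β : Type*} {f : α → β} (hf : Surjective f) :
    Surjective (Sym2.map f) := by
  intro e
  induction e using Sym2.ind with
  | _ a b =>
    obtain ⟨a, rfl⟩ := hf a
    obtain ⟨b, rfl⟩ := hf b
    exact ⟨s(a, b), rfl⟩

namespace SimpleGraph

variable {V : Type*} {Γ : SimpleGraph V} {B : Set (Set V)}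

/-- The part `P_Q` of `Γ` lifted from a part `Q = q` of a decomposition of the quotient `Γ_B`. -/
def liftEdges (Γ : SimpleGraph V) (B : Set (Set V)) (q : Set (Sym2 (Set V))) : Set (Sym2 V) :=
  {e | e ∈ Γ.edgeSet ∧ ∃ α β : V, e = s(α, β) ∧
    ∃ bi ∈ B, ∃ bj ∈ B, α ∈ bi ∧ β ∈ bj ∧ s(bi, bj) ∈ q}

theorem liftEdges_subset_edgeSet (q : Set (Sym2 (Set V))) : Γ.liftEdges B q ⊆ Γ.edgeSet :=
  fun _ he => he.1

theorem mk_mem_liftEdges_iff (hB : B.PairwiseDisjoint id) {q : Set (Sym2 (Set V))}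
    {α β : V} {bα bβ : Set V} (hbα : bα ∈ B) (hbβ : bβ ∈ B) (hα : α ∈ bα) (hβ : β ∈ bβ) :
    s(α, β) ∈ Γ.liftEdges B q ↔ Γ.Adj α β ∧ s(bα, bβ) ∈ q := by
  constructor
  · rintro ⟨hadj, α', β', heq, bi, hbi, bj, hbj, hαi, hβj, hq⟩
    refine ⟨hadj, ?_⟩
    rcases Sym2.eq_iff.mp heq with ⟨rfl, rfl⟩ | ⟨rfl, rfl⟩
    · rwa [hB.elim_set hbα hbi α hα hαi, hB.elim_set hbβ hbj β hβ hβj]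
    · rwa [hB.elim_set hbα hbj α hα hβj, hB.elim_set hbβ hbi β hβ hαi, Sym2.eq_swap]
  · rintro ⟨hadj, hq⟩
    exact ⟨hadj, α, β, rfl, bα, hbα, bβ, hbβ, hα, hβ, hq⟩

variable (hB : B.PairwiseDisjoint id) (hBcover : ∀ α : V, ∃ b ∈ B, α ∈ b)
include hB hBcover

theorem existsUnique_mem_liftEdges {ΓB : SimpleGraph (Set V)}
    (hΓB : ∀ b₁ ∈ B, ∀ b₂ ∈ B, ∀ α ∈ b₁, ∀ β ∈ b₂, Γ.Adj α β → ΓB.Adj b₁ b₂)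
    {Q : Set (Set (Sym2 (Set V)))} (hQcover : ∀ e ∈ ΓB.edgeSet, ∃! q, q ∈ Q ∧ e ∈ q)
    {e : Sym2 V} (he : e ∈ Γ.edgeSet) :
    ∃! p, p ∈ Γ.liftEdges B '' Q ∧ e ∈ p := by
  induction e using Sym2.ind with
  | _ α β =>
    obtain ⟨bα, hbα, hα⟩ := hBcover α
    obtain ⟨bβ, hbβ, hβ⟩ := hBcover β
    have hmem {q : Set (Sym2 (Set V))} := mk_mem_liftEdges_iff (Γ := Γ) (q := q) hB hbα hbβ hα hβ
    obtain ⟨q, ⟨hqQ, hq⟩, huniq⟩ := hQcover s(bα, bβ) (hΓB bα hbα bβ hbβ α hα β hβ he)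
    refine ⟨Γ.liftEdges B q, ⟨⟨q, hqQ, rfl⟩, hmem.mpr ⟨he, hq⟩⟩, ?_⟩
    rintro _ ⟨⟨q', hq'Q, rfl⟩, hq'⟩
    rw [huniq q' ⟨hq'Q, (hmem.mp hq').2⟩]

theorem map_mem_liftEdges_iff {g : Equiv.Perm V} (hgΓ : ∀ α β : V, Γ.Adj α β ↔ Γ.Adj (g α) (g β))
    (hgB : ∀ b ∈ B, ⇑g '' b ∈ B) (q : Set (Sym2 (Set V))) (e : Sym2 V) :
    Sym2.map g e ∈ Γ.liftEdges B (Sym2.map (Set.image g) '' q) ↔ e ∈ Γ.liftEdges B q := by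
  induction e using Sym2.ind with
  | _ α β =>
    obtain ⟨bα, hbα, hα⟩ := hBcover α
    obtain ⟨bβ, hbβ, hβ⟩ := hBcover β
    have hinj : Injective (Sym2.map (Set.image g)) :=
      Sym2.map.injective (Set.image_injective.mpr g.injective)
    rw [Sym2.map_mk, mk_mem_liftEdges_iff hB hbα hbβ hα hβ,
      mk_mem_liftEdges_iff hB (hgB _ hbα) (hgB _ hbβ) (Set.mem_image_of_mem g hα)
        (Set.mem_image_of_mem g hβ), ← hgΓ, ← Sym2.map_mk, hinj.mem_set_image]

theorem image_liftEdges {g : Equiv.Perm V} (hgΓ : ∀ α β : V, Γ.Adj α β ↔ Γ.Adj (g α) (g β))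
    (hgB : ∀ b ∈ B, ⇑g '' b ∈ B) (q : Set (Sym2 (Set V))) :
    Sym2.map g '' Γ.liftEdges B q = Γ.liftEdges B (Sym2.map (Set.image g) '' q) := by
  have hpre : Γ.liftEdges B q = Sym2.map g ⁻¹' Γ.liftEdges B (Sym2.map (Set.image g) '' q) :=
    Set.ext fun e => (map_mem_liftEdges_iff hB hBcover hgΓ hgB q e).symm
  rw [hpre, (Sym2.map.surjective g.surjective).image_preimage]

end SimpleGraph

open SimpleGraph

theorem quotient_construction_transitive_decomposition_general
    {V : Type*} (Γ : SimpleGraph V) (G : Subgroup (Equiv.Perm V))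
    -- G is a vertex-transitive group of automorphisms of Γ
    (hGaut : ∀ g ∈ G, ∀ α β : V, Γ.Adj α β ↔ Γ.Adj (g α) (g β))
    -- B is a partition of VΓ into independent sets
    (B : Set (Set V))
    (hBdisj : ∀ b ∈ B, ∀ b' ∈ B, b ≠ b' → b ∩ b' = ∅)
    (hBcover : ∀ α : V, ∃ b ∈ B, α ∈ b)
    (hBind : ∀ b ∈ B, ∀ α ∈ b, ∀ β ∈ b, ¬Γ.Adj α β)
    -- B is G-invariant
    (hBinv : ∀ g ∈ G, ∀ b ∈ B, (⇑g '' b) ∈ B)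
    -- the imprimitive quotient Γ_B (blocks adjacent iff joined by an edge of Γ)
    (ΓB : SimpleGraph (Set V))
    (hΓB : ∀ b₁ b₂ : Set V, ΓB.Adj b₁ b₂ ↔
      (b₁ ∈ B ∧ b₂ ∈ B ∧ b₁ ≠ b₂ ∧ ∃ α ∈ b₁, ∃ β ∈ b₂, Γ.Adj α β))
    -- (Γ_B, Q) is a G^B-transitive decomposition
    (Q : Set (Set (Sym2 (Set V))))
    (hQcover : ∀ e ∈ ΓB.edgeSet, ∃! q, q ∈ Q ∧ e ∈ q)
    (hQinv : ∀ g ∈ G, ∀ q ∈ Q, (Sym2.map (Set.image ⇑g)) '' q ∈ Q)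
    (hQtrans : ∀ q ∈ Q, ∀ q' ∈ Q, ∃ g ∈ G, (Sym2.map (Set.image ⇑g)) '' q = q')
    -- the lifted parts P_Q and partition P
    (PQ : Set (Sym2 (Set V)) → Set (Sym2 V))
    (hPQ : ∀ q, PQ q = {e | e ∈ Γ.edgeSet ∧ ∃ α β : V, e = s(α, β) ∧
      ∃ bi ∈ B, ∃ bj ∈ B, α ∈ bi ∧ β ∈ bj ∧ s(bi, bj) ∈ q})
    (P : Set (Set (Sym2 V))) (hP : P = {p | ∃ q ∈ Q, p = PQ q}) :
    -- (Γ, P) is a G-transitive decomposition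
    (∀ p ∈ P, p ⊆ Γ.edgeSet) ∧
    (∀ e ∈ Γ.edgeSet, ∃! p, p ∈ P ∧ e ∈ p) ∧
    (∀ g ∈ G, ∀ p ∈ P, (Sym2.map ⇑g) '' p ∈ P) ∧
    (∀ p ∈ P, ∀ p' ∈ P, ∃ g ∈ G, (Sym2.map ⇑g) '' p = p') := by
  have hB : B.PairwiseDisjoint id := fun b hb b' hb' hne =>
    Set.disjoint_iff_inter_eq_empty.mpr (hBdisj b hb b' hb' hne)
  obtain rfl : PQ = Γ.liftEdges B := funext hPQ
  have hPimage : P = Γ.liftEdges B '' Q := by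
    ext p; simp [hP, eq_comm]
  subst hPimage
  have hΓB' : ∀ b₁ ∈ B, ∀ b₂ ∈ B, ∀ α ∈ b₁, ∀ β ∈ b₂, Γ.Adj α β → ΓB.Adj b₁ b₂ :=
    fun b₁ hb₁ b₂ hb₂ α hα β hβ hadj => (hΓB b₁ b₂).mpr ⟨hb₁, hb₂,
      fun h => hBind b₁ hb₁ α hα β (h ▸ hβ) hadj, α, hα, β, hβ, hadj⟩
  refine ⟨?_, fun e he => existsUnique_mem_liftEdges hB hBcover hΓB' hQcover he, ?_, ?_⟩
  · rintro _ ⟨q, -, rfl⟩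
    exact liftEdges_subset_edgeSet q
  · rintro g hg _ ⟨q, hq, rfl⟩
    exact ⟨_, hQinv g hg q hq, (image_liftEdges hB hBcover (hGaut g hg) (hBinv g hg) q).symm⟩
  · rintro _ ⟨q, hq, rfl⟩ _ ⟨q', hq', rfl⟩
    obtain ⟨g, hg, rfl⟩ := hQtrans q hq q' hq'
    exact ⟨g, hg, image_liftEdges hB hBcover (hGaut g hg) (hBinv g hg) q⟩

/-- Construction 1 / Lemma 2: let `B` be a `G`-invariant
partition of `VΓ` into independent sets, `Γ_B` the imprimitive quotient, and
`(Γ_B, Q)` a `G^B`-transitive decomposition.  Lifting each part `Q` to the set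
`P_Q` of edges of `Γ` lying between blocks joined by `Q` yields a
`G`-transitive decomposition `(Γ, P)`. -/
theorem quotient_construction_transitive_decomposition
    {V : Type*} (Γ : SimpleGraph V) (G : Subgroup (Equiv.Perm V))
    -- G is a vertex-transitive group of automorphisms of Γ
    (hGaut : ∀ g ∈ G, ∀ α β : V, Γ.Adj α β ↔ Γ.Adj (g α) (g β))
    (hGvtx : ∀ α β : V, ∃ g ∈ G, g α = β)
    -- B is a partition of VΓ into independent sets
    (B : Set (Set V))
    (hBne : ∀ b ∈ B, b.Nonempty)
    (hBdisj : ∀ b ∈ B, ∀ b' ∈ B, b ≠ b' → b ∩ b' = ∅)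
    (hBcover : ∀ α : V, ∃ b ∈ B, α ∈ b)
    (hBind : ∀ b ∈ B, ∀ α ∈ b, ∀ β ∈ b, ¬Γ.Adj α β)
    -- B is G-invariant
    (hBinv : ∀ g ∈ G, ∀ b ∈ B, (⇑g '' b) ∈ B)
    -- the imprimitive quotient Γ_B (blocks adjacent iff joined by an edge of Γ)
    (ΓB : SimpleGraph (Set V))
    (hΓB : ∀ b₁ b₂ : Set V, ΓB.Adj b₁ b₂ ↔
      (b₁ ∈ B ∧ b₂ ∈ B ∧ b₁ ≠ b₂ ∧ ∃ α ∈ b₁, ∃ β ∈ b₂, Γ.Adj α β))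
    -- (Γ_B, Q) is a G^B-transitive decomposition
    (Q : Set (Set (Sym2 (Set V))))
    (hQsub : ∀ q ∈ Q, q ⊆ ΓB.edgeSet)
    (hQcover : ∀ e ∈ ΓB.edgeSet, ∃! q, q ∈ Q ∧ e ∈ q)
    (hQinv : ∀ g ∈ G, ∀ q ∈ Q, (Sym2.map (Set.image ⇑g)) '' q ∈ Q)
    (hQtrans : ∀ q ∈ Q, ∀ q' ∈ Q, ∃ g ∈ G, (Sym2.map (Set.image ⇑g)) '' q = q')
    -- the lifted parts P_Q and partition P
    (PQ : Set (Sym2 (Set V)) → Set (Sym2 V))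
    (hPQ : ∀ q, PQ q = {e | e ∈ Γ.edgeSet ∧ ∃ α β : V, e = s(α, β) ∧
      ∃ bi ∈ B, ∃ bj ∈ B, α ∈ bi ∧ β ∈ bj ∧ s(bi, bj) ∈ q})
    (P : Set (Set (Sym2 V))) (hP : P = {p | ∃ q ∈ Q, p = PQ q}) :
    -- (Γ, P) is a G-transitive decomposition
    (∀ p ∈ P, p ⊆ Γ.edgeSet) ∧
    (∀ e ∈ Γ.edgeSet, ∃! p, p ∈ P ∧ e ∈ p) ∧
    (∀ g ∈ G, ∀ p ∈ P, (Sym2.map ⇑g) '' p ∈ P) ∧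
    (∀ p ∈ P, ∀ p' ∈ P, ∃ g ∈ G, (Sym2.map ⇑g) '' p = p') :=
  quotient_construction_transitive_decomposition_general Γ G hGaut B hBdisj hBcover hBind hBinv ΓB
    hΓB Q hQcover hQinv hQtrans PQ hPQ P hP
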